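/- Let H be a 3-partite 3-graph with classes each of size n, let M be a maximum matching in H, and let X_i = V_i \ V(M). For any S = (x_1,x_2,x_3) with x_i ∈ X_i and any two edges e_1, e_2 ∈ M, the link graph L_S(e_1,e_2) = L_{x_1}(e_1,e_2) ∪ L_{x_2}(e_1,e_2) ∪ L_{x_3}(e_1,e_2) does not contain a matching of size 3. -/

import Mathlib

/-!
Three pairwise disjoint pairs of the union link give three pairwise disjoint edges `g₁, g₂, g₃`
of `H`. By pigeonhole on the two vertices of `e₁, e₂` in each class, the three link classes are
distinct, so every `g_k` meets the vertex `x c_k`, which `M` does not cover, and its other two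
vertices lie in `V(e₁) ∪ V(e₂)`. Hence the `g_k` are pairwise disjoint and disjoint from the
edges of `M` other than `e₁, e₂`, and exchanging `e₁, e₂` for `g₁, g₂, g₃` enlarges `M`.
-/

/-- `M` is a matching in the 3-partite 3-graph `H` (edges encoded as functions
`Fin 3 → Fin n`, one vertex per class). -/
def IsMatching {n : ℕ} (H M : Finset (Fin 3 → Fin n)) : Prop :=
  M ⊆ H ∧ ∀ e ∈ M, ∀ f ∈ M, e ≠ f → ∀ i, e i ≠ f i

/-- A pair of the link graph `L_{x c}(e₁,e₂)`, recorded via the full edge `g = {x c} ∪ T`: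
`g` is an edge of `H` through the vertex `x c` of class `c`, all of whose other vertices
lie in `V(e₁) ∪ V(e₂)` (at most one in each `V(e_j)` is automatic since `g` is legal). -/
def IsLinkPair {n : ℕ} (H : Finset (Fin 3 → Fin n)) (x : Fin 3 → Fin n)
    (e₁ e₂ : Fin 3 → Fin n) (c : Fin 3) (g : Fin 3 → Fin n) : Prop :=
  g ∈ H ∧ g c = x c ∧ ∀ j, j ≠ c → (g j = e₁ j ∨ g j = e₂ j)

/-- The pairs represented by `(c, g)` and `(c', g')` are vertex-disjoint. -/
def PairDisjoint {n : ℕ} (c c' : Fin 3) (g g' : Fin 3 → Fin n) : Prop :=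
  ∀ j, j ≠ c → j ≠ c' → g j ≠ g' j

lemma Fin.pairwise_ne_of_forall_eq_or_eq_or_eq (c₁ c₂ c₃ : Fin 3)
    (h : ∀ j : Fin 3, j = c₁ ∨ j = c₂ ∨ j = c₃) :
    c₁ ≠ c₂ ∧ c₁ ≠ c₃ ∧ c₂ ≠ c₃ := by
  revert h; revert c₁ c₂ c₃; decide

section Matching

variable {n : ℕ} {H M N : Finset (Fin 3 → Fin n)}

lemma IsMatching.mono (hM : IsMatching H M) (hNM : N ⊆ M) : IsMatching H N :=
  ⟨hNM.trans hM.1, fun e he f hf => hM.2 e (hNM he) f (hNM hf)⟩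

lemma IsMatching.union (hM : IsMatching H M) (hN : IsMatching H N)
    (hMN : ∀ e ∈ M, ∀ f ∈ N, ∀ i, e i ≠ f i) : IsMatching H (M ∪ N) := by
  refine ⟨Finset.union_subset hM.1 hN.1, ?_⟩
  intro e he f hf hef i
  rcases Finset.mem_union.1 he with he | he <;> rcases Finset.mem_union.1 hf with hf | hf
  · exact hM.2 e he f hf hef i
  · exact hMN e he f hf i
  · exact (hMN f hf e he i).symm
  · exact hN.2 e he f hf hef i

lemma isMatching_triple {g₁ g₂ g₃ : Fin 3 → Fin n} (h₁ : g₁ ∈ H) (h₂ : g₂ ∈ H) (h₃ : g₃ ∈ H)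
    (d₁₂ : ∀ i, g₁ i ≠ g₂ i) (d₁₃ : ∀ i, g₁ i ≠ g₃ i) (d₂₃ : ∀ i, g₂ i ≠ g₃ i) :
    IsMatching H {g₁, g₂, g₃} := by
  refine ⟨by simp [Finset.insert_subset_iff, h₁, h₂, h₃], ?_⟩
  simp only [Finset.mem_insert, Finset.mem_singleton]
  rintro e (rfl | rfl | rfl) f (rfl | rfl | rfl) hef i <;>
    first
      | exact absurd rfl hef
      | exact d₁₂ i | exact (d₁₂ i).symm
      | exact d₁₃ i | exact (d₁₃ i).symm
      | exact d₂₃ i | exact (d₂₃ i).symm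

/-- Exchange argument: if a matching `N` avoids `M \ P`, then `(M \ P) ∪ N` is a matching,
so maximality of `M` forces `#N ≤ #P`. -/
lemma IsMatching.card_le_of_disjoint_sdiff (hM : IsMatching H M)
    (hmax : ∀ M', IsMatching H M' → M'.card ≤ M.card) (hN : IsMatching H N)
    (P : Finset (Fin 3 → Fin n)) (hNP : ∀ f ∈ M \ P, ∀ g ∈ N, ∀ i, f i ≠ g i) :
    N.card ≤ P.card := by
  have hdisj : Disjoint (M \ P) N :=
    Finset.disjoint_left.2 fun f hf hfN => hNP f hf f hfN 0 rfl
  have hexch := hmax _ ((hM.mono Finset.sdiff_subset).union hN hNP)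
  rw [Finset.card_union_of_disjoint hdisj] at hexch
  have := Finset.card_le_card_sdiff_add_card (s := M) (t := P)
  omega

end Matching

section Link

variable {n : ℕ} {H : Finset (Fin 3 → Fin n)} {x e₁ e₂ g g' : Fin 3 → Fin n} {c c' : Fin 3}

lemma IsLinkPair.apply_ne_of_ne (hg : IsLinkPair H x e₁ e₂ c g)
    (hx₁ : ∀ i, e₁ i ≠ x i) (hx₂ : ∀ i, e₂ i ≠ x i) {j : Fin 3} (hj : j ≠ c) : g j ≠ x j := by
  rcases hg.2.2 j hj with h | h <;> rw [h]
  exacts [hx₁ j, hx₂ j]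

lemma IsLinkPair.apply_ne_apply (hg : IsLinkPair H x e₁ e₂ c g)
    (hg' : IsLinkPair H x e₁ e₂ c' g') (hx₁ : ∀ i, e₁ i ≠ x i) (hx₂ : ∀ i, e₂ i ≠ x i)
    (hcc' : c ≠ c') (hd : PairDisjoint c c' g g') (j : Fin 3) : g j ≠ g' j := by
  by_cases hjc : j = c
  · subst hjc
    rw [hg.2.1]
    exact (hg'.apply_ne_of_ne hx₁ hx₂ hcc').symm
  by_cases hjc' : j = c'
  · subst hjc'
    rw [hg'.2.1]
    exact hg.apply_ne_of_ne hx₁ hx₂ hjc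
  exact hd j hjc hjc'

lemma IsLinkPair.apply_ne_of_mem {M : Finset (Fin 3 → Fin n)} (hg : IsLinkPair H x e₁ e₂ c g)
    (hM : IsMatching H M) (hx : ∀ i, ∀ e ∈ M, e i ≠ x i) (he₁ : e₁ ∈ M) (he₂ : e₂ ∈ M)
    {f : Fin 3 → Fin n} (hf : f ∈ M) (hf₁ : f ≠ e₁) (hf₂ : f ≠ e₂) (j : Fin 3) : f j ≠ g j := by
  by_cases hjc : j = c
  · subst hjc
    rw [hg.2.1]
    exact hx j f hf
  rcases hg.2.2 j hjc with h | h <;> rw [h]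
  exacts [hM.2 f hf e₁ he₁ hf₁ j, hM.2 f hf e₂ he₂ hf₂ j]

/-- Each vertex of a pair of `L_{x c}(e₁,e₂)` outside class `c` is one of the two vertices of
`e₁, e₂` in its class, so three disjoint pairs cannot all avoid a class. -/
lemma IsLinkPair.classes_cover {c₁ c₂ c₃ : Fin 3} {g₁ g₂ g₃ : Fin 3 → Fin n}
    (h₁ : IsLinkPair H x e₁ e₂ c₁ g₁) (h₂ : IsLinkPair H x e₁ e₂ c₂ g₂)
    (h₃ : IsLinkPair H x e₁ e₂ c₃ g₃) (d₁₂ : PairDisjoint c₁ c₂ g₁ g₂)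
    (d₁₃ : PairDisjoint c₁ c₃ g₁ g₃) (d₂₃ : PairDisjoint c₂ c₃ g₂ g₃) (j : Fin 3) :
    j = c₁ ∨ j = c₂ ∨ j = c₃ := by
  by_contra! hj
  obtain ⟨hj₁, hj₂, hj₃⟩ := hj
  rcases h₁.2.2 j hj₁ with a | a <;> rcases h₂.2.2 j hj₂ with b | b <;>
    rcases h₃.2.2 j hj₃ with c | c <;>
    first
      | exact d₁₂ j hj₁ hj₂ (a.trans b.symm)
      | exact d₁₃ j hj₁ hj₃ (a.trans c.symm)
      | exact d₂₃ j hj₂ hj₃ (b.trans c.symm)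

end Link

theorem link_no_matching_of_size_three_general {n : ℕ} (H M : Finset (Fin 3 → Fin n))
    (hM : IsMatching H M) (hmax : ∀ M', IsMatching H M' → M'.card ≤ M.card)
    (x : Fin 3 → Fin n) (hx : ∀ i, ∀ e ∈ M, e i ≠ x i)
    (e₁ e₂ : Fin 3 → Fin n) (he₁ : e₁ ∈ M) (he₂ : e₂ ∈ M) :
    ¬ ∃ (c₁ c₂ c₃ : Fin 3) (g₁ g₂ g₃ : Fin 3 → Fin n),
        IsLinkPair H x e₁ e₂ c₁ g₁ ∧ IsLinkPair H x e₁ e₂ c₂ g₂ ∧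
        IsLinkPair H x e₁ e₂ c₃ g₃ ∧
        PairDisjoint c₁ c₂ g₁ g₂ ∧ PairDisjoint c₁ c₃ g₁ g₃ ∧
        PairDisjoint c₂ c₃ g₂ g₃ := by
  rintro ⟨c₁, c₂, c₃, g₁, g₂, g₃, h₁, h₂, h₃, d₁₂, d₁₃, d₂₃⟩
  obtain ⟨n₁₂, n₁₃, n₂₃⟩ := Fin.pairwise_ne_of_forall_eq_or_eq_or_eq c₁ c₂ c₃
    (IsLinkPair.classes_cover h₁ h₂ h₃ d₁₂ d₁₃ d₂₃)
  have hx₁ i := hx i e₁ he₁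
  have hx₂ i := hx i e₂ he₂
  have k₁₂ := h₁.apply_ne_apply h₂ hx₁ hx₂ n₁₂ d₁₂
  have k₁₃ := h₁.apply_ne_apply h₃ hx₁ hx₂ n₁₃ d₁₃
  have k₂₃ := h₂.apply_ne_apply h₃ hx₁ hx₂ n₂₃ d₂₃
  have hcard : ({g₁, g₂, g₃} : Finset _).card = 3 := Finset.card_eq_three.2
    ⟨g₁, g₂, g₃, fun h => k₁₂ 0 (congrFun h 0), fun h => k₁₃ 0 (congrFun h 0),
      fun h => k₂₃ 0 (congrFun h 0), rfl⟩
  have hle := hM.card_le_of_disjoint_sdiff hmax (isMatching_triple h₁.1 h₂.1 h₃.1 k₁₂ k₁₃ k₂₃)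
    {e₁, e₂} (by
      intro f hf g hg
      simp only [Finset.mem_sdiff, Finset.mem_insert, Finset.mem_singleton, not_or] at hf hg
      obtain ⟨hfM, hf₁, hf₂⟩ := hf
      rcases hg with rfl | rfl | rfl
      exacts [h₁.apply_ne_of_mem hM hx he₁ he₂ hfM hf₁ hf₂,
        h₂.apply_ne_of_mem hM hx he₁ he₂ hfM hf₁ hf₂, h₃.apply_ne_of_mem hM hx he₁ he₂ hfM hf₁ hf₂])
  have := Finset.card_le_two (a := e₁) (b := e₂)
  omega

/-- Let `M` be a maximum matching in a 3-partite 3-graph `H`, let `x i ∈ X_i` be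
uncovered vertices, one per class, and let `e₁ ≠ e₂` be edges of `M`. Then the union
link graph `L_S(e₁,e₂) = L_{x₁}(e₁,e₂) ∪ L_{x₂}(e₁,e₂) ∪ L_{x₃}(e₁,e₂)` contains no
matching of size 3. -/
theorem link_no_matching_of_size_three {n : ℕ} (H M : Finset (Fin 3 → Fin n))
    (hM : IsMatching H M) (hmax : ∀ M', IsMatching H M' → M'.card ≤ M.card)
    (x : Fin 3 → Fin n) (hx : ∀ i, ∀ e ∈ M, e i ≠ x i)
    (e₁ e₂ : Fin 3 → Fin n) (he₁ : e₁ ∈ M) (he₂ : e₂ ∈ M) (hne : e₁ ≠ e₂) :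
    ¬ ∃ (c₁ c₂ c₃ : Fin 3) (g₁ g₂ g₃ : Fin 3 → Fin n),
        IsLinkPair H x e₁ e₂ c₁ g₁ ∧ IsLinkPair H x e₁ e₂ c₂ g₂ ∧
        IsLinkPair H x e₁ e₂ c₃ g₃ ∧
        PairDisjoint c₁ c₂ g₁ g₂ ∧ PairDisjoint c₁ c₃ g₁ g₃ ∧
        PairDisjoint c₂ c₃ g₂ g₃ :=
  link_no_matching_of_size_three_general H M hM hmax x hx e₁ e₂ he₁ he₂
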